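/- arXiv:2405.12128 — 2 statements merged into one kernel-verified Lean document; each statement's English description precedes it below -/
import Mathlib

section
/- Let (g, ω) be a quasi-Frobenius Lie superalgebra (a Lie superalgebra over a field of characteristic 0 with a non-degenerate closed super-antisymmetric bilinear form ω) and let j be a homogeneous ideal of g that is isotropic with respect to ω (i.e., j ⊆ j^⊥). Then j is abelian, i.e., [x,y] = 0 for all x, y ∈ j. -/
/-- The orthogonal of a subspace with respect to a bilinear form. -/
def perp {K V : Type} [Field K] [AddCommGroup V] [Module K V]
    (ω : V →ₗ[K] V →ₗ[K] K) (J : Submodule K V) : Submodule K V where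
  carrier := {x | ∀ y ∈ J, ω x y = 0}
  add_mem' := by
    intro a b ha hb y hy
    simp [map_add, LinearMap.add_apply, ha y hy, hb y hy]
  zero_mem' := by intro y hy; simp
  smul_mem' := by
    intro c a ha y hy
    simp [map_smul, LinearMap.smul_apply, ha y hy]

/-- an isotropic homogeneous ideal of a quasi-Frobenius Lie
superalgebra is abelian. -/
theorem isotropic_homogeneous_ideal_is_abelian
    (K V : Type) [Field K] [CharZero K] [AddCommGroup V] [Module K V]
    (g : ZMod 2 → Submodule K V)
    (hsup : g 0 ⊔ g 1 = ⊤) (hinf : g 0 ⊓ g 1 = ⊥)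
    (br : V →ₗ[K] V →ₗ[K] V)
    (hgrading : ∀ i j : ZMod 2, ∀ x ∈ g i, ∀ y ∈ g j, br x y ∈ g (i + j))
    (hanti : ∀ i j : ZMod 2, ∀ x ∈ g i, ∀ y ∈ g j,
      br x y = (-((-1 : K) ^ (i.val * j.val))) • br y x)
    (hjac : ∀ i j k : ZMod 2, ∀ x ∈ g i, ∀ y ∈ g j, ∀ z ∈ g k,
      ((-1 : K) ^ (i.val * k.val)) • br (br x y) z
        + ((-1 : K) ^ (i.val * j.val)) • br (br y z) x
        + ((-1 : K) ^ (j.val * k.val)) • br (br z x) y = 0)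
    (ω : V →ₗ[K] V →ₗ[K] K)
    (hnondeg : ∀ x : V, (∀ y : V, ω x y = 0) → x = 0)
    (hωanti : ∀ i j : ZMod 2, ∀ x ∈ g i, ∀ y ∈ g j,
      ω x y = (-((-1 : K) ^ (i.val * j.val))) * ω y x)
    (hclosed : ∀ i j k : ZMod 2, ∀ x ∈ g i, ∀ y ∈ g j, ∀ z ∈ g k,
      ((-1 : K) ^ (i.val * k.val)) * ω x (br y z)
        + ((-1 : K) ^ (k.val * j.val)) * ω z (br x y)
        + ((-1 : K) ^ (j.val * i.val)) * ω y (br z x) = 0)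
    (J : Submodule K V)
    (hideal : ∀ x ∈ J, ∀ y : V, br x y ∈ J ∧ br y x ∈ J)
    (hhom : J = (J ⊓ g 0) ⊔ (J ⊓ g 1))
    (hiso : J ≤ perp ω J) :
    ∀ x ∈ J, ∀ y ∈ J, br x y = 0 := by
  -- homogeneous case: ω z (br x y) = 0
  have key : ∀ i j k : ZMod 2, ∀ x ∈ J ⊓ g i, ∀ y ∈ J ⊓ g j, ∀ z ∈ g k,
      ω z (br x y) = 0 := by
    intro i j k x hx y hy z hz
    obtain ⟨hxJ, hxg⟩ := hx
    obtain ⟨hyJ, hyg⟩ := hy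
    have h1 : ω x (br y z) = 0 := hiso hxJ _ ((hideal y hyJ z).1)
    have h2 : ω y (br z x) = 0 := hiso hyJ _ ((hideal x hxJ z).2)
    have hc := hclosed i j k x hxg y hyg z hz
    rw [h1, h2, mul_zero, mul_zero, zero_add, add_zero] at hc
    have hne : ((-1 : K) ^ (k.val * j.val)) ≠ 0 := pow_ne_zero _ (by norm_num)
    exact (mul_eq_zero.mp hc).resolve_left hne
  -- homogeneous case, other side
  have key2 : ∀ i j : ZMod 2, ∀ x ∈ J ⊓ g i, ∀ y ∈ J ⊓ g j, ∀ z : V,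
      ω (br x y) z = 0 := by
    intro i j x hx y hy z
    have hz : z ∈ g 0 ⊔ g 1 := by rw [hsup]; trivial
    obtain ⟨z0, hz0, z1, hz1, rfl⟩ := Submodule.mem_sup.mp hz
    have hbg : br x y ∈ g (i + j) := hgrading i j x hx.2 y hy.2
    have f : ∀ k : ZMod 2, ∀ w ∈ g k, ω (br x y) w = 0 := by
      intro k w hw
      rw [hωanti (i + j) k (br x y) hbg w hw, key i j k x hx y hy w hw, mul_zero]
    rw [map_add, f 0 z0 hz0, f 1 z1 hz1, add_zero]
  intro x hx y hy
  have hx' : x ∈ (J ⊓ g 0) ⊔ (J ⊓ g 1) := hhom ▸ hx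
  have hy' : y ∈ (J ⊓ g 0) ⊔ (J ⊓ g 1) := hhom ▸ hy
  obtain ⟨x0, hx0, x1, hx1, rfl⟩ := Submodule.mem_sup.mp hx'
  obtain ⟨y0, hy0, y1, hy1, rfl⟩ := Submodule.mem_sup.mp hy'
  apply hnondeg
  intro z
  simp only [map_add, LinearMap.add_apply, key2 0 0 x0 hx0 y0 hy0 z,
    key2 0 1 x0 hx0 y1 hy1 z, key2 1 0 x1 hx1 y0 hy0 z,
    key2 1 1 x1 hx1 y1 hy1 z, add_zero]
end

section
/- In the standard-model bracket on d = l* ⊕ a ⊕ l, the super Jacobi identity applied to a triple (a, L_1, L_2) with a ∈ a and L_1, L_2 ∈ l decomposes into two conditions: the a-component yields ad(α(L_1,L_2)) = (d_CE^1 ξ + (1/2)[ξ∧ξ]_a)(L_1,L_2) and the l*-component yields (d_{ξ̂} γ)(L_1,L_2)(a) = β(a, α(L_1,L_2)) (up to sign conventions), where d_{ξ̂}γ(L_1,L_2)(a) = -(-1)^{|L_1||L_2|}γ(L_2)(ξ(L_1)(a)) + γ(L_1)(ξ(L_2)(a)). -/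
/-- The induced grading on the dual space: `(l*)_i` consists of the
functionals vanishing on `l_{i+1}`. -/
def dualG {K L : Type} [Field K] [AddCommGroup L] [Module K L]
    (gL : ZMod 2 → Submodule K L) (i : ZMod 2) :
    Submodule K (Module.Dual K L) where
  carrier := {Z | ∀ y ∈ gL (i + 1), Z y = 0}
  add_mem' := by
    intro a b ha hb y hy
    simp [LinearMap.add_apply, ha y hy, hb y hy]
  zero_mem' := by intro y hy; simp
  smul_mem' := by
    intro c a ha y hy
    simp [LinearMap.smul_apply, ha y hy]

/-
Since `l*` is central, each of the three double brackets is read off the bracket table once the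
inner bracket has been evaluated. The only term not already in the shape of the conditions is
`[[L₁, L₂], a] = (β(α(L₁, L₂), a), [α(L₁, L₂), a]_a, 0)`; super-antisymmetry of `[ , ]_a`, and
that of `β`, which it inherits from `ω_a` through the defining equation of `β`, turn it into
`[a, α(L₁, L₂)]`. Collecting the signs, a finite check over the parities, the Jacobi sum is then
minus the vector whose `l*`- and `a`-components are the two conditions.
-/

theorem ZMod.two_eq_zero_or_one (i : ZMod 2) : i = 0 ∨ i = 1 := by
  revert i; decide

theorem neg_one_pow_swap_sign (K : Type*) [CommRing K] (i j m : ZMod 2) (t₁ t₂ : K) :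
    -((-1 : K) ^ (m.val * (j.val + i.val))) * (-((-1 : K) ^ ((m + j).val * i.val)) * t₁)
      - (-1 : K) ^ (i.val * m.val) * (-((-1 : K) ^ (j.val * (m + i).val)) * t₂)
    = -((-1 : K) ^ (j.val * i.val)) *
        (-((-1 : K) ^ (m.val * (i.val + j.val))) * t₂ - (-1 : K) ^ (j.val * m.val) * t₁) := by
  rcases i.two_eq_zero_or_one with rfl | rfl <;> rcases j.two_eq_zero_or_one with rfl | rfl <;>
    rcases m.two_eq_zero_or_one with rfl | rfl <;>
    simp [ZMod.val_one, show (1 + 1 : ZMod 2) = 0 from rfl] <;> ring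

theorem neg_one_pow_jacobi_sign (K : Type*) [CommRing K] {M : Type*} [AddCommGroup M] [Module K M]
    (i j k : ZMod 2) (x₁ x₂ x₃ : M) :
    (-1 : K) ^ (i.val * k.val) • (-((-1 : K) ^ (i.val * j.val))) •
        (-((-1 : K) ^ ((j + i).val * k.val))) • x₁
      + (-1 : K) ^ (i.val * j.val) • (-((-1 : K) ^ ((j + k).val * i.val))) • x₂
      + (-1 : K) ^ (j.val * k.val) • (-((-1 : K) ^ ((k + i).val * j.val))) • x₃
    = -((-1 : K) ^ (i.val * k.val) • x₂ + (-1 : K) ^ (i.val * j.val) • x₃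
        - (-1 : K) ^ (j.val * (i.val + k.val)) • x₁) := by
  rcases i.two_eq_zero_or_one with rfl | rfl <;> rcases j.two_eq_zero_or_one with rfl | rfl <;>
    rcases k.two_eq_zero_or_one with rfl | rfl <;>
    simp [ZMod.val_one, show (1 + 1 : ZMod 2) = 0 from rfl] <;> module

theorem LinearMap.apply_mk_eq_of_apply_fst_eq_zero {R P Q N M : Type*} [CommSemiring R]
    [AddCommMonoid P] [Module R P] [AddCommMonoid Q] [Module R Q]
    [AddCommMonoid N] [Module R N] [AddCommMonoid M] [Module R M]
    (f : P × Q →ₗ[R] N →ₗ[R] M) (hf : ∀ p y, f (p, 0) y = 0) (p : P) (q : Q) (y : N) :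
    f (p, q) y = f (0, q) y := by
  have split : (p, q) = (p, 0) + (0, q) := by simp
  rw [split, map_add, LinearMap.add_apply, hf, zero_add]

theorem beta_super_antisymm {K A L : Type*} [CommRing K] [AddCommGroup A] [Module K A]
    [AddCommGroup L] [Module K L] (gA : ZMod 2 → Submodule K A) (gL : ZMod 2 → Submodule K L)
    (hsupL : gL 0 ⊔ gL 1 = ⊤) (ωa : A →ₗ[K] A →ₗ[K] K)
    (hωantiA : ∀ i j : ZMod 2, ∀ x ∈ gA i, ∀ y ∈ gA j,
      ωa x y = (-((-1 : K) ^ (i.val * j.val))) * ωa y x)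
    (ξ : L →ₗ[K] A →ₗ[K] A) (β : A →ₗ[K] A →ₗ[K] Module.Dual K L)
    (hξgr : ∀ i j : ZMod 2, ∀ Lv ∈ gL i, ∀ a ∈ gA j, ξ Lv a ∈ gA (i + j))
    (hβ : ∀ i j k : ZMod 2, ∀ a ∈ gA i, ∀ b ∈ gA j, ∀ Lv ∈ gL k,
      β a b Lv = -((-1 : K) ^ (k.val * (i.val + j.val))) * ωa (ξ Lv a) b
        - ((-1 : K) ^ (j.val * k.val)) * ωa a (ξ Lv b))
    {i j : ZMod 2} {a b : A} (ha : a ∈ gA i) (hb : b ∈ gA j) :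
    β b a = (-((-1 : K) ^ (j.val * i.val))) • β a b := by
  have on_homogeneous (m : ZMod 2) :
      Set.EqOn (β b a) ((-((-1 : K) ^ (j.val * i.val))) • β a b) (gL m) := by
    intro z hz
    rw [Pi.smul_apply, smul_eq_mul, hβ j i m b hb a ha z hz, hβ i j m a ha b hb z hz,
      hωantiA _ i _ (hξgr m j z hz b hb) a ha, hωantiA j _ b hb _ (hξgr m i z hz a ha)]
    exact neg_one_pow_swap_sign K i j m _ _
  exact LinearMap.ext_on_codisjoint (codisjoint_iff.mpr hsupL) (on_homogeneous 0)
    (on_homogeneous 1)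

theorem jacobi_on_a_L1_L2_decomposes_general
    (K A L : Type) [Field K]
    [AddCommGroup A] [Module K A] [AddCommGroup L] [Module K L]
    -- the quasi-Frobenius Lie superalgebra a
    (gA : ZMod 2 → Submodule K A)
    (brA : A →ₗ[K] A →ₗ[K] A)
    (hantiA : ∀ i j : ZMod 2, ∀ x ∈ gA i, ∀ y ∈ gA j,
      brA x y = (-((-1 : K) ^ (i.val * j.val))) • brA y x)
    (ωa : A →ₗ[K] A →ₗ[K] K)
    (hωantiA : ∀ i j : ZMod 2, ∀ x ∈ gA i, ∀ y ∈ gA j,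
      ωa x y = (-((-1 : K) ^ (i.val * j.val))) * ωa y x)
    -- the abelian Lie superalgebra l
    (gL : ZMod 2 → Submodule K L)
    (hsupL : gL 0 ⊔ gL 1 = ⊤)
    -- the structure maps of the extension
    (ξ : L →ₗ[K] A →ₗ[K] A)
    (γ : L →ₗ[K] A →ₗ[K] Module.Dual K L)
    (ε : L →ₗ[K] L →ₗ[K] Module.Dual K L)
    (α : L →ₗ[K] L →ₗ[K] A)
    (β : A →ₗ[K] A →ₗ[K] Module.Dual K L)
    (hξgr : ∀ i j : ZMod 2, ∀ Lv ∈ gL i, ∀ a ∈ gA j, ξ Lv a ∈ gA (i + j))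
    (hαgr : ∀ i j : ZMod 2, ∀ L₁ ∈ gL i, ∀ L₂ ∈ gL j, α L₁ L₂ ∈ gA (i + j))
    -- defining equation for β
    (hβ : ∀ i j k : ZMod 2, ∀ a ∈ gA i, ∀ b ∈ gA j, ∀ Lv ∈ gL k,
      β a b Lv = -((-1 : K) ^ (k.val * (i.val + j.val))) * ωa (ξ Lv a) b
        - ((-1 : K) ^ (j.val * k.val)) * ωa a (ξ Lv b))
    (brD : (Module.Dual K L × A × L) →ₗ[K] (Module.Dual K L × A × L)
      →ₗ[K] (Module.Dual K L × A × L))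
    (hbrZ : ∀ Z : Module.Dual K L, ∀ y : Module.Dual K L × A × L,
      brD (Z, 0, 0) y = 0 ∧ brD y (Z, 0, 0) = 0)
    (hbrAA : ∀ a b : A,
      brD ((0 : Module.Dual K L), a, (0 : L)) ((0 : Module.Dual K L), b, (0 : L))
        = (β a b, brA a b, 0))
    (hbrLA : ∀ Lv : L, ∀ a : A,
      brD ((0 : Module.Dual K L), (0 : A), Lv) ((0 : Module.Dual K L), a, (0 : L))
        = (γ Lv a, ξ Lv a, 0))
    (hbrAL : ∀ i j : ZMod 2, ∀ a ∈ gA i, ∀ Lv ∈ gL j,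
      brD ((0 : Module.Dual K L), a, (0 : L)) ((0 : Module.Dual K L), (0 : A), Lv)
        = (-((-1 : K) ^ (i.val * j.val))) • ((γ Lv a, ξ Lv a, 0)
            : Module.Dual K L × A × L))
    (hbrLL : ∀ L₁ L₂ : L,
      brD ((0 : Module.Dual K L), (0 : A), L₁) ((0 : Module.Dual K L), (0 : A), L₂)
        = (ε L₁ L₂, α L₁ L₂, 0))
    : ∀ i j k : ZMod 2, ∀ a ∈ gA i, ∀ L₁ ∈ gL j, ∀ L₂ ∈ gL k,
      (((-1 : K) ^ (i.val * k.val))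
          • brD (brD ((0 : Module.Dual K L), a, (0 : L))
              ((0 : Module.Dual K L), (0 : A), L₁))
            ((0 : Module.Dual K L), (0 : A), L₂)
        + ((-1 : K) ^ (i.val * j.val))
          • brD (brD ((0 : Module.Dual K L), (0 : A), L₁)
              ((0 : Module.Dual K L), (0 : A), L₂))
            ((0 : Module.Dual K L), a, (0 : L))
        + ((-1 : K) ^ (j.val * k.val))
          • brD (brD ((0 : Module.Dual K L), (0 : A), L₂)
              ((0 : Module.Dual K L), a, (0 : L)))
            ((0 : Module.Dual K L), (0 : A), L₁) = 0)
      ↔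
      ((((-1 : K) ^ (i.val * k.val)) • brA a (α L₁ L₂)
          + ((-1 : K) ^ (i.val * j.val)) • ξ L₁ (ξ L₂ a)
          - ((-1 : K) ^ (j.val * (i.val + k.val))) • ξ L₂ (ξ L₁ a) = 0)
        ∧ (((-1 : K) ^ (i.val * k.val)) • β a (α L₁ L₂)
          + ((-1 : K) ^ (i.val * j.val)) • γ L₁ (ξ L₂ a)
          - ((-1 : K) ^ (j.val * (i.val + k.val))) • γ L₂ (ξ L₁ a) = 0)) := by
  intro i j k a ha L₁ hL₁ L₂ hL₂
  have hα₁₂ := hαgr j k L₁ hL₁ L₂ hL₂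
  have central (Z : Module.Dual K L) (x : A × L) (y : Module.Dual K L × A × L) :
      brD (Z, x) y = brD (0, x) y :=
    brD.apply_mk_eq_of_apply_fst_eq_zero (fun Z y ↦ (hbrZ Z y).1) Z x y
  have bracket_α_a : brD (0, α L₁ L₂, 0) (0, a, 0)
      = (-((-1 : K) ^ ((j + k).val * i.val))) • (β a (α L₁ L₂), brA a (α L₁ L₂), (0 : L)) := by
    rw [hbrAA, hantiA _ _ _ hα₁₂ a ha,
      beta_super_antisymm gA gL hsupL ωa hωantiA ξ β hξgr hβ ha hα₁₂, Prod.smul_mk,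
      Prod.smul_mk, smul_zero]
  rw [hbrAL i j a ha L₁ hL₁, map_smul, LinearMap.smul_apply, central (γ L₁ a),
    hbrAL _ k _ (hξgr j i L₁ hL₁ a ha) L₂ hL₂, hbrLL, central (ε L₁ L₂), bracket_α_a, hbrLA,
    central (γ L₂ a), hbrAL _ j _ (hξgr k i L₂ hL₂ a ha) L₁ hL₁]
  simp only [Prod.smul_mk, Prod.mk_add_mk, smul_zero, add_zero, Prod.mk_eq_zero,
    neg_one_pow_jacobi_sign K (M := Module.Dual K L), neg_one_pow_jacobi_sign K (M := A),
    neg_eq_zero, and_true]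
  exact and_comm

/-- in the standard-model bracket on d = l* ⊕ a ⊕ l, the super
Jacobi identity for a triple (a, L₁, L₂) decomposes into an a-component
(condition on ξ and α) and an l*-component (condition relating γ, ξ, β, α). -/
theorem jacobi_on_a_L1_L2_decomposes
    (K A L : Type) [Field K] [CharZero K]
    [AddCommGroup A] [Module K A] [AddCommGroup L] [Module K L]
    -- the quasi-Frobenius Lie superalgebra a
    (gA : ZMod 2 → Submodule K A)
    (hsupA : gA 0 ⊔ gA 1 = ⊤) (hinfA : gA 0 ⊓ gA 1 = ⊥)
    (brA : A →ₗ[K] A →ₗ[K] A)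
    (hgrA : ∀ i j : ZMod 2, ∀ x ∈ gA i, ∀ y ∈ gA j, brA x y ∈ gA (i + j))
    (hantiA : ∀ i j : ZMod 2, ∀ x ∈ gA i, ∀ y ∈ gA j,
      brA x y = (-((-1 : K) ^ (i.val * j.val))) • brA y x)
    (hjacA : ∀ i j k : ZMod 2, ∀ x ∈ gA i, ∀ y ∈ gA j, ∀ z ∈ gA k,
      ((-1 : K) ^ (i.val * k.val)) • brA (brA x y) z
        + ((-1 : K) ^ (i.val * j.val)) • brA (brA y z) x
        + ((-1 : K) ^ (j.val * k.val)) • brA (brA z x) y = 0)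
    (ωa : A →ₗ[K] A →ₗ[K] K)
    (hnondegA : ∀ x : A, (∀ y : A, ωa x y = 0) → x = 0)
    (hωantiA : ∀ i j : ZMod 2, ∀ x ∈ gA i, ∀ y ∈ gA j,
      ωa x y = (-((-1 : K) ^ (i.val * j.val))) * ωa y x)
    (hclosedA : ∀ i j k : ZMod 2, ∀ x ∈ gA i, ∀ y ∈ gA j, ∀ z ∈ gA k,
      ((-1 : K) ^ (i.val * k.val)) * ωa x (brA y z)
        + ((-1 : K) ^ (k.val * j.val)) * ωa z (brA x y)
        + ((-1 : K) ^ (j.val * i.val)) * ωa y (brA z x) = 0)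
    -- the abelian Lie superalgebra l
    (gL : ZMod 2 → Submodule K L)
    (hsupL : gL 0 ⊔ gL 1 = ⊤) (hinfL : gL 0 ⊓ gL 1 = ⊥)
    -- the structure maps of the extension
    (ξ : L →ₗ[K] A →ₗ[K] A)
    (γ : L →ₗ[K] A →ₗ[K] Module.Dual K L)
    (ε : L →ₗ[K] L →ₗ[K] Module.Dual K L)
    (α : L →ₗ[K] L →ₗ[K] A)
    (β : A →ₗ[K] A →ₗ[K] Module.Dual K L)
    (hξgr : ∀ i j : ZMod 2, ∀ Lv ∈ gL i, ∀ a ∈ gA j, ξ Lv a ∈ gA (i + j))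
    (hαgr : ∀ i j : ZMod 2, ∀ L₁ ∈ gL i, ∀ L₂ ∈ gL j, α L₁ L₂ ∈ gA (i + j))
    -- ξ takes values in superderivations of a
    (hder : ∀ i j k : ZMod 2, ∀ Lv ∈ gL i, ∀ a ∈ gA j, ∀ b ∈ gA k,
      ξ Lv (brA a b)
        = brA (ξ Lv a) b + ((-1 : K) ^ (i.val * j.val)) • brA a (ξ Lv b))
    -- defining equation for β
    (hβ : ∀ i j k : ZMod 2, ∀ a ∈ gA i, ∀ b ∈ gA j, ∀ Lv ∈ gL k,
      β a b Lv = -((-1 : K) ^ (k.val * (i.val + j.val))) * ωa (ξ Lv a) b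
        - ((-1 : K) ^ (j.val * k.val)) * ωa a (ξ Lv b))
    -- defining equation for α
    (hα : ∀ i j k : ZMod 2, ∀ a ∈ gA i, ∀ L₁ ∈ gL j, ∀ L₂ ∈ gL k,
      ωa a (α L₁ L₂) = ((-1 : K) ^ (k.val * (j.val + i.val))) * γ L₂ a L₁
        - ((-1 : K) ^ (i.val * j.val)) * γ L₁ a L₂)
    (brD : (Module.Dual K L × A × L) →ₗ[K] (Module.Dual K L × A × L)
      →ₗ[K] (Module.Dual K L × A × L))
    (hbrZ : ∀ Z : Module.Dual K L, ∀ y : Module.Dual K L × A × L,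
      brD (Z, 0, 0) y = 0 ∧ brD y (Z, 0, 0) = 0)
    (hbrAA : ∀ a b : A,
      brD ((0 : Module.Dual K L), a, (0 : L)) ((0 : Module.Dual K L), b, (0 : L))
        = (β a b, brA a b, 0))
    (hbrLA : ∀ Lv : L, ∀ a : A,
      brD ((0 : Module.Dual K L), (0 : A), Lv) ((0 : Module.Dual K L), a, (0 : L))
        = (γ Lv a, ξ Lv a, 0))
    (hbrAL : ∀ i j : ZMod 2, ∀ a ∈ gA i, ∀ Lv ∈ gL j,
      brD ((0 : Module.Dual K L), a, (0 : L)) ((0 : Module.Dual K L), (0 : A), Lv)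
        = (-((-1 : K) ^ (i.val * j.val))) • ((γ Lv a, ξ Lv a, 0)
            : Module.Dual K L × A × L))
    (hbrLL : ∀ L₁ L₂ : L,
      brD ((0 : Module.Dual K L), (0 : A), L₁) ((0 : Module.Dual K L), (0 : A), L₂)
        = (ε L₁ L₂, α L₁ L₂, 0))
    : ∀ i j k : ZMod 2, ∀ a ∈ gA i, ∀ L₁ ∈ gL j, ∀ L₂ ∈ gL k,
      (((-1 : K) ^ (i.val * k.val))
          • brD (brD ((0 : Module.Dual K L), a, (0 : L))
              ((0 : Module.Dual K L), (0 : A), L₁))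
            ((0 : Module.Dual K L), (0 : A), L₂)
        + ((-1 : K) ^ (i.val * j.val))
          • brD (brD ((0 : Module.Dual K L), (0 : A), L₁)
              ((0 : Module.Dual K L), (0 : A), L₂))
            ((0 : Module.Dual K L), a, (0 : L))
        + ((-1 : K) ^ (j.val * k.val))
          • brD (brD ((0 : Module.Dual K L), (0 : A), L₂)
              ((0 : Module.Dual K L), a, (0 : L)))
            ((0 : Module.Dual K L), (0 : A), L₁) = 0)
      ↔
      ((((-1 : K) ^ (i.val * k.val)) • brA a (α L₁ L₂)
          + ((-1 : K) ^ (i.val * j.val)) • ξ L₁ (ξ L₂ a)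
          - ((-1 : K) ^ (j.val * (i.val + k.val))) • ξ L₂ (ξ L₁ a) = 0)
        ∧ (((-1 : K) ^ (i.val * k.val)) • β a (α L₁ L₂)
          + ((-1 : K) ^ (i.val * j.val)) • γ L₁ (ξ L₂ a)
          - ((-1 : K) ^ (j.val * (i.val + k.val))) • γ L₂ (ξ L₁ a) = 0)) :=
  jacobi_on_a_L1_L2_decomposes_general K A L gA brA hantiA ωa hωantiA gL hsupL ξ γ ε α β hξgr hαgr
    hβ brD hbrZ hbrAA hbrLA hbrAL hbrLL
end
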